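/- The map μ sending a permutation π ∈ S_n to its major index table m₁m₂⋯mₙ is a bijection from S_n onto E_n = {w₁⋯wₙ : 0 ≤ w_i ≤ i-1}, and satisfies Σ_{i=1}^n m_i = maj(π). -/

import Mathlib

namespace BS

/-- `l` is (the one-line notation of) a permutation of `{1,...,n}`. -/
def isPerm (l : List ℕ) (n : ℕ) : Prop := l.Perm ((List.range n).map (· + 1))

/-- number of inversions -/
def inv (l : List ℕ) : ℕ :=
  ((Finset.range l.length ×ˢ Finset.range l.length).filter
    (fun p => p.1 < p.2 ∧ l.getD p.2 0 < l.getD p.1 0)).card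

/-- the set of (0-indexed) descent positions -/
def desSet (l : List ℕ) : Finset ℕ :=
  (Finset.range (l.length - 1)).filter (fun i => l.getD (i + 1) 0 < l.getD i 0)

def des (l : List ℕ) : ℕ := (desSet l).card

/-- major index: sum of the (1-indexed) descent positions -/
def maj (l : List ℕ) : ℕ := ∑ i ∈ desSet l, (i + 1)

/-- number of occurrences of the generalized pattern ac-b (132, first two letters adjacent) -/
def acb (l : List ℕ) : ℕ :=
  ((Finset.range l.length ×ˢ Finset.range l.length).filter
    (fun p => p.1 + 2 ≤ p.2 ∧ l.getD p.1 0 < l.getD p.2 0 ∧ l.getD p.2 0 < l.getD (p.1 + 1) 0)).card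

/-- number of occurrences of the generalized pattern ba-c (213, first two letters adjacent) -/
def bac (l : List ℕ) : ℕ :=
  ((Finset.range l.length ×ˢ Finset.range l.length).filter
    (fun p => p.1 + 2 ≤ p.2 ∧ l.getD (p.1 + 1) 0 < l.getD p.1 0 ∧ l.getD p.1 0 < l.getD p.2 0)).card

/-- number of occurrences of the generalized pattern cb-a (321, first two letters adjacent) -/
def cba (l : List ℕ) : ℕ :=
  ((Finset.range l.length ×ˢ Finset.range l.length).filter
    (fun p => p.1 + 2 ≤ p.2 ∧ l.getD p.2 0 < l.getD (p.1 + 1) 0 ∧ l.getD (p.1 + 1) 0 < l.getD p.1 0)).card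

/-- Babson–Steingrímsson's statistic stat = (ac-b)+(ba-c)+(cb-a)+(ba) -/
def stat (l : List ℕ) : ℕ := acb l + bac l + cba l + des l

/-- first letter -/
def F (l : List ℕ) : ℕ := l.headD 0

/-- insertion space `j` (i.e. between letters `j-1` and `j`, 0-indexed) is a descent space -/
def isDescSpace (σ : List ℕ) (j : ℕ) : Prop :=
  1 ≤ j ∧ j < σ.length ∧ σ.getD j 0 < σ.getD (j - 1) 0

instance (σ : List ℕ) (j : ℕ) : Decidable (isDescSpace σ j) := by
  unfold isDescSpace; infer_instance

def isAscSpace (σ : List ℕ) (j : ℕ) : Prop :=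
  1 ≤ j ∧ j < σ.length ∧ σ.getD (j - 1) 0 < σ.getD j 0

instance (σ : List ℕ) (j : ℕ) : Decidable (isAscSpace σ j) := by
  unfold isAscSpace; infer_instance

/-- maj-labeling of the insertion spaces `0,...,σ.length`: the final space gets `0`,
descent spaces get `1,...,des σ` from right to left, the remaining spaces get
`des σ + 1, ...` from left to right. -/
def majLabel (σ : List ℕ) (j : ℕ) : ℕ :=
  if j = σ.length then 0
  else if isDescSpace σ j then
    1 + ((Finset.Ico (j + 1) σ.length).filter (fun t => isDescSpace σ t)).card
  else des σ + 1 + ((Finset.range j).filter (fun t => ¬ isDescSpace σ t)).card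

/-- stat-labeling of the insertion spaces: descent spaces and the final space get
`0,...,des σ` from left to right, the initial space gets `des σ + 1`, and ascent
spaces get `des σ + 2, ...` from right to left. -/
def statLabel (σ : List ℕ) (j : ℕ) : ℕ :=
  if j = σ.length then des σ
  else if isDescSpace σ j then ((Finset.range j).filter (fun t => isDescSpace σ t)).card
  else if j = 0 then des σ + 1
  else des σ + 1 + ((Finset.Ico j σ.length).filter (fun t => isAscSpace σ t)).card

/-- index of the insertion space carrying label `i` in the labeling `lab` -/
def spaceOfLabel (lab : List ℕ → ℕ → ℕ) (σ : List ℕ) (i : ℕ) : ℕ :=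
  ((List.range (σ.length + 1)).find? (fun j => decide (lab σ j = i))).getD 0

/-- insert `v` at the space with inv-label `i` (spaces labeled from right to left) -/
def insertAtInvLabel (i : ℕ) (σ : List ℕ) (v : ℕ) : List ℕ :=
  σ.insertIdx (σ.length - i) v

def insertAtMajLabel (i : ℕ) (σ : List ℕ) (v : ℕ) : List ℕ :=
  σ.insertIdx (spaceOfLabel majLabel σ i) v

def insertAtStatLabel (i : ℕ) (σ : List ℕ) (v : ℕ) : List ℕ :=
  σ.insertIdx (spaceOfLabel statLabel σ i) v

/-- inversion table: `c_i` is the inv-label of the space of `π⁽ⁱ⁻¹⁾` that letter `i` occupies -/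
def invTable (π : List ℕ) : List ℕ :=
  (List.range π.length).map (fun k =>
    if k = 0 then 0
    else (π.filter (· ≤ k)).length - (π.filter (· ≤ k + 1)).idxOf (k + 1))

/-- major index table -/
def majTable (π : List ℕ) : List ℕ :=
  (List.range π.length).map (fun k =>
    if k = 0 then 0
    else majLabel (π.filter (· ≤ k)) ((π.filter (· ≤ k + 1)).idxOf (k + 1)))

/-- stat table -/
def statTable (π : List ℕ) : List ℕ :=
  (List.range π.length).map (fun k =>
    if k = 0 then 0
    else statLabel (π.filter (· ≤ k)) ((π.filter (· ≤ k + 1)).idxOf (k + 1)))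

/-- `w ∈ E_n`, i.e. `w = w₁⋯wₙ` with `0 ≤ wᵢ ≤ i - 1` -/
def memE (w : List ℕ) (n : ℕ) : Prop :=
  w.length = n ∧ ∀ k < n, w.getD k 0 ≤ k

/-- the map ρ : complement-reverse `π⁽ᵏ⁾` (k the first letter) behind its first letter,
then reinsert `k+1,…,n` at the maj-labels given by the stat table of `π`. -/
def rho (π : List ℕ) : List ℕ :=
  let n := π.length
  let k := π.headD 0
  let s := statTable π
  (List.range (n - k)).foldl
    (fun σ m => insertAtMajLabel (s.getD (k + m) 0) σ (k + m + 1))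
    (k :: (((π.filter (· ≤ k)).tail.map (fun x => k - x)).reverse))

/-- the finset of one-line notations of permutations of `{1,…,n}` -/
def perms (n : ℕ) : Finset (List ℕ) :=
  (((List.range n).map (· + 1)).permutations).toFinset

/-- the q-factorial `[n]_q!` -/
def qFact {R : Type*} [CommSemiring R] (q : R) (n : ℕ) : R :=
  ∏ k ∈ Finset.range n, ∑ j ∈ Finset.range (k + 1), q ^ j

lemma getD_eq_getElem' (l : List ℕ) (j : ℕ) (h : j < l.length) : l.getD j 0 = l[j] := by
  simp [List.getD_eq_getElem?_getD, List.getElem?_eq_getElem h]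
lemma getD_eq_zero (l : List ℕ) (j : ℕ) (h : l.length ≤ j) : l.getD j 0 = 0 := by
  simp [List.getD_eq_getElem?_getD, List.getElem?_eq_none h]
lemma getD_insertIdx_lt (l : List ℕ) (v p j : ℕ) (hp : p ≤ l.length) (hj : j < p) :
    (l.insertIdx p v).getD j 0 = l.getD j 0 := by
  have hjl : j < l.length := lt_of_lt_of_le hj hp
  rw [getD_eq_getElem' _ _ (by rw [List.length_insertIdx_of_le_length hp]; omega),
    getD_eq_getElem' _ _ hjl]
  exact List.getElem_insertIdx_of_lt hj _
lemma getD_insertIdx_self (l : List ℕ) (v p : ℕ) (hp : p ≤ l.length) :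
    (l.insertIdx p v).getD p 0 = v := by
  rw [getD_eq_getElem' _ _ (by rw [List.length_insertIdx_of_le_length hp]; omega)]
  exact List.getElem_insertIdx_self _
lemma getD_insertIdx_ge (l : List ℕ) (v p j : ℕ) (hp : p ≤ l.length) (hj : p ≤ j) :
    (l.insertIdx p v).getD (j + 1) 0 = l.getD j 0 := by
  rcases lt_or_ge j l.length with h | h
  · rw [getD_eq_getElem' _ _ (by rw [List.length_insertIdx_of_le_length hp]; omega),
      getD_eq_getElem' _ _ h]
    have h2 := List.getElem_insertIdx_add_succ l v p (j - p) (by omega)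
    simpa only [Nat.add_sub_cancel' hj] using h2
  · rw [getD_eq_zero _ _ (by rw [List.length_insertIdx_of_le_length hp]; omega), getD_eq_zero _ _ h]

lemma mem_desSet {l : List ℕ} {i : ℕ} :
    i ∈ desSet l ↔ i < l.length - 1 ∧ l.getD (i + 1) 0 < l.getD i 0 := by
  simp [desSet]

lemma mem_desSet_insertIdx {σ : List ℕ} {v p : ℕ} (hp : p ≤ σ.length)
    (hv : ∀ j, σ.getD j 0 < v) {i : ℕ} :
    i ∈ desSet (σ.insertIdx p v) ↔
      (i + 1 < p ∧ i ∈ desSet σ) ∨ (p < i ∧ i - 1 ∈ desSet σ) ∨ (i = p ∧ p < σ.length) := by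
  have hlen : (σ.insertIdx p v).length = σ.length + 1 := List.length_insertIdx_of_le_length hp v
  rw [mem_desSet, hlen, Nat.add_sub_cancel]
  constructor
  · rintro ⟨him, hdesc⟩
    rcases lt_trichotomy i p with hip | rfl | hip
    · rcases eq_or_lt_of_le (Nat.succ_le_of_lt hip) with he | hlt
      · exfalso
        have hps : p = i + 1 := by omega
        subst hps
        rw [getD_insertIdx_self _ _ _ hp, getD_insertIdx_lt _ _ _ _ hp hip] at hdesc
        exact absurd hdesc (not_lt.2 (hv i).le)
      · refine Or.inl ⟨hlt, ?_⟩
        rw [mem_desSet]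
        rw [getD_insertIdx_lt _ _ _ _ hp hlt, getD_insertIdx_lt _ _ _ _ hp hip] at hdesc
        exact ⟨by omega, hdesc⟩
    · exact Or.inr (Or.inr ⟨rfl, him⟩)
    · refine Or.inr (Or.inl ⟨hip, ?_⟩)
      rw [mem_desSet]
      have h1 : (σ.insertIdx p v).getD i 0 = σ.getD (i - 1) 0 := by
        have := getD_insertIdx_ge σ v p (i - 1) hp (by omega)
        rwa [show i - 1 + 1 = i by omega] at this
      have h2 : (σ.insertIdx p v).getD (i + 1) 0 = σ.getD i 0 :=
        getD_insertIdx_ge σ v p i hp (by omega)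
      rw [h1, h2] at hdesc
      rw [show i - 1 + 1 = i by omega]
      exact ⟨by omega, hdesc⟩
  · rintro (⟨hip, hd⟩ | ⟨hip, hd⟩ | ⟨rfl, him⟩)
    · rw [mem_desSet] at hd
      refine ⟨by omega, ?_⟩
      rw [getD_insertIdx_lt _ _ _ _ hp hip, getD_insertIdx_lt _ _ _ _ hp (by omega)]
      exact hd.2
    · rw [mem_desSet] at hd
      refine ⟨by omega, ?_⟩
      have h1 : (σ.insertIdx p v).getD i 0 = σ.getD (i - 1) 0 := by
        have := getD_insertIdx_ge σ v p (i - 1) hp (by omega)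
        rwa [show i - 1 + 1 = i by omega] at this
      have h2 : (σ.insertIdx p v).getD (i + 1) 0 = σ.getD i 0 :=
        getD_insertIdx_ge σ v p i hp (by omega)
      rw [h1, h2]
      have := hd.2
      rwa [show i - 1 + 1 = i by omega] at this
    · refine ⟨him, ?_⟩
      rw [getD_insertIdx_self _ _ _ hp, getD_insertIdx_ge _ _ _ _ hp le_rfl]
      exact hv _

lemma desSet_insertIdx (σ : List ℕ) (v p : ℕ) (hp : p ≤ σ.length)
    (hv : ∀ j, σ.getD j 0 < v) :
    desSet (σ.insertIdx p v) =
      (((desSet σ).filter (fun i => i + 1 < p)) ∪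
        ((desSet σ).filter (fun i => p ≤ i)).image (· + 1)) ∪
      (Finset.range σ.length).filter (fun i => i = p) := by
  ext i
  rw [mem_desSet_insertIdx hp hv]
  simp only [Finset.mem_union, Finset.mem_filter, Finset.mem_image, Finset.mem_range]
  constructor
  · rintro (⟨hip, hd⟩ | ⟨hip, hd⟩ | ⟨rfl, him⟩)
    · exact Or.inl (Or.inl ⟨hd, hip⟩)
    · refine Or.inl (Or.inr ⟨i - 1, ⟨hd, by omega⟩, by omega⟩)
    · exact Or.inr ⟨him, rfl⟩
  · rintro ((⟨hd, hip⟩ | ⟨j, ⟨hd, hpj⟩, rfl⟩) | ⟨him, rfl⟩)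
    · exact Or.inl ⟨hip, hd⟩
    · exact Or.inr (Or.inl ⟨by omega, by simpa using hd⟩)
    · exact Or.inr (Or.inr ⟨rfl, him⟩)

lemma mem_desSet_isDescSpace {σ : List ℕ} {p : ℕ} (h1 : 1 ≤ p) (h2 : p < σ.length) :
    p - 1 ∈ desSet σ ↔ isDescSpace σ p := by
  rw [mem_desSet, isDescSpace, show p - 1 + 1 = p by omega]
  constructor
  · rintro ⟨_, h⟩; exact ⟨h1, h2, h⟩
  · rintro ⟨_, _, h⟩; exact ⟨by omega, h⟩

lemma range_filter_descSpace (σ : List ℕ) (p : ℕ) (hp : p ≤ σ.length) :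
    (Finset.range p).filter (fun t => isDescSpace σ t) =
      ((desSet σ).filter (fun i => i + 1 < p)).image (· + 1) := by
  ext t
  simp only [Finset.mem_filter, Finset.mem_range, Finset.mem_image]
  constructor
  · rintro ⟨htp, h1, h2, h3⟩
    refine ⟨t - 1, ⟨?_, by omega⟩, by omega⟩
    rw [mem_desSet, show t - 1 + 1 = t by omega]
    exact ⟨by omega, h3⟩
  · rintro ⟨j, ⟨hj, hjp⟩, rfl⟩
    rw [mem_desSet] at hj
    exact ⟨hjp, by omega, by omega, by rw [Nat.add_sub_cancel]; exact hj.2⟩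

lemma Ico_filter_descSpace (σ : List ℕ) (p : ℕ) :
    (Finset.Ico (p + 1) σ.length).filter (fun t => isDescSpace σ t) =
      ((desSet σ).filter (fun i => p ≤ i)).image (· + 1) := by
  ext t
  simp only [Finset.mem_filter, Finset.mem_Ico, Finset.mem_image]
  constructor
  · rintro ⟨⟨htp, htm⟩, h1, h2, h3⟩
    refine ⟨t - 1, ⟨?_, by omega⟩, by omega⟩
    rw [mem_desSet, show t - 1 + 1 = t by omega]
    exact ⟨by omega, h3⟩
  · rintro ⟨j, ⟨hj, hjp⟩, rfl⟩
    rw [mem_desSet] at hj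
    exact ⟨⟨by omega, by omega⟩, by omega, by omega, by rw [Nat.add_sub_cancel]; exact hj.2⟩

lemma maj_insertIdx (σ : List ℕ) (v p : ℕ) (hp : p ≤ σ.length)
    (hv : ∀ j, σ.getD j 0 < v) :
    maj (σ.insertIdx p v) = maj σ + majLabel σ p := by
  rcases eq_or_lt_of_le hp with rfl | hpm
  · have hd : desSet (σ.insertIdx σ.length v) = desSet σ := by
      ext i
      rw [mem_desSet_insertIdx le_rfl hv]
      constructor
      · rintro (⟨_, h⟩ | ⟨h1, h2⟩ | ⟨rfl, h⟩)
        · exact h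
        · exact absurd (mem_desSet.1 h2).1 (by omega)
        · omega
      · intro h
        exact Or.inl ⟨by have := (mem_desSet.1 h).1; omega, h⟩
    rw [maj, hd, majLabel, if_pos rfl, ← maj, Nat.add_zero]
  · set A := (desSet σ).filter (fun i => i + 1 < p) with hA
    set B := (desSet σ).filter (fun i => p ≤ i) with hB
    have hC : (Finset.range σ.length).filter (fun i => i = p) = {p} := by
      ext i
      simp only [Finset.mem_filter, Finset.mem_range, Finset.mem_singleton]
      omega
    have hdisj1 : Disjoint A (B.image (· + 1)) := by
      rw [Finset.disjoint_left]
      intro a ha hb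
      rw [hA, Finset.mem_filter] at ha
      simp only [Finset.mem_image, hB, Finset.mem_filter] at hb
      omega
    have hdisj2 : Disjoint (A ∪ B.image (· + 1)) ({p} : Finset ℕ) := by
      rw [Finset.disjoint_left]
      intro a ha hb
      simp only [Finset.mem_singleton] at hb
      subst hb
      simp only [Finset.mem_union, hA, hB, Finset.mem_filter, Finset.mem_image] at ha
      rcases ha with ⟨_, h⟩ | ⟨j, ⟨_, h1⟩, h2⟩ <;> omega
    have hsumB : ∑ i ∈ B.image (· + 1), (i + 1) = (∑ i ∈ B, (i + 1)) + B.card := by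
      rw [Finset.sum_image (by intro a _ b _ h; simp only at h; omega), Finset.sum_add_distrib,
        Finset.sum_const, smul_eq_mul, mul_one]
    have hmajτ : maj (σ.insertIdx p v) =
        (∑ i ∈ A, (i + 1)) + ((∑ i ∈ B, (i + 1)) + B.card) + (p + 1) := by
      rw [maj, desSet_insertIdx σ v p hp hv, hC, Finset.sum_union hdisj2,
        Finset.sum_union hdisj1, Finset.sum_singleton, hsumB]
    have hmajσ : maj σ = (∑ i ∈ A, (i + 1)) +
        ∑ i ∈ (desSet σ).filter (fun i => ¬ i + 1 < p), (i + 1) := by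
      rw [maj, Finset.sum_filter_add_sum_filter_not]
    have hcards : des σ = A.card + ((desSet σ).filter (fun i => ¬ i + 1 < p)).card := by
      rw [des, ← Finset.card_filter_add_card_filter_not (p := fun i => i + 1 < p)]
    by_cases hds : isDescSpace σ p
    · have hp1 : 1 ≤ p := hds.1
      have hpd : p - 1 ∈ desSet σ := (mem_desSet_isDescSpace hp1 hpm).2 hds
      have hsplit : (desSet σ).filter (fun i => ¬ i + 1 < p) = insert (p - 1) B := by
        ext i
        simp only [Finset.mem_filter, Finset.mem_insert, hB]
        constructor
        · rintro ⟨hi, hip⟩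
          rcases eq_or_lt_of_le (by omega : p - 1 ≤ i) with he | hlt
          · exact Or.inl he.symm
          · exact Or.inr ⟨hi, by omega⟩
        · rintro (rfl | ⟨hi, hip⟩)
          · exact ⟨hpd, by omega⟩
          · exact ⟨hi, by omega⟩
      have hpnB : p - 1 ∉ B := by
        rw [hB, Finset.mem_filter]
        push_neg
        intro _
        omega
      rw [hsplit, Finset.sum_insert hpnB, show p - 1 + 1 = p by omega] at hmajσ
      rw [majLabel, if_neg (by omega), if_pos hds, Ico_filter_descSpace,
        Finset.card_image_of_injective _ (add_left_injective 1), ← hB]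
      omega
    · have hsplit : (desSet σ).filter (fun i => ¬ i + 1 < p) = B := by
        ext i
        simp only [Finset.mem_filter, hB]
        constructor
        · rintro ⟨hi, hip⟩
          refine ⟨hi, ?_⟩
          rcases Nat.eq_zero_or_pos p with rfl | hp1
          · omega
          rcases eq_or_lt_of_le (by omega : p - 1 ≤ i) with he | hlt
          · exfalso
            rw [← he] at hi
            exact hds ((mem_desSet_isDescSpace hp1 hpm).1 hi)
          · omega
        · rintro ⟨hi, hip⟩
          exact ⟨hi, by omega⟩
      rw [hsplit] at hmajσ hcards
      have hrange : ((Finset.range p).filter (fun t => isDescSpace σ t)).card = A.card := by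
        rw [range_filter_descSpace σ p hp, ← hA,
          Finset.card_image_of_injective _ (add_left_injective 1)]
      have hrsplit : ((Finset.range p).filter (fun t => isDescSpace σ t)).card +
          ((Finset.range p).filter (fun t => ¬ isDescSpace σ t)).card = p := by
        rw [Finset.card_filter_add_card_filter_not, Finset.card_range]
      rw [majLabel, if_neg (by omega), if_neg hds]
      omega

lemma card_range_filter_desc (σ : List ℕ) :
    ((Finset.range σ.length).filter (fun t => isDescSpace σ t)).card = des σ := by
  rw [range_filter_descSpace σ σ.length le_rfl,
    Finset.card_image_of_injective _ (add_left_injective 1), des]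
  congr 1
  apply Finset.filter_true_of_mem
  intro i hi
  have := (mem_desSet.1 hi).1
  omega

lemma card_range_filter_nondesc (σ : List ℕ) :
    ((Finset.range σ.length).filter (fun t => ¬ isDescSpace σ t)).card = σ.length - des σ := by
  have h := Finset.card_filter_add_card_filter_not (s := Finset.range σ.length)
    (p := fun t => isDescSpace σ t)
  rw [Finset.card_range, card_range_filter_desc] at h
  omega

lemma des_le_length (σ : List ℕ) : des σ ≤ σ.length := by
  have := card_range_filter_desc σ
  have h2 := Finset.card_filter_le (Finset.range σ.length) (fun t => isDescSpace σ t)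
  rw [Finset.card_range] at h2
  omega

lemma majLabel_pos {σ : List ℕ} {j : ℕ} (hj : j < σ.length) : 1 ≤ majLabel σ j := by
  rw [majLabel, if_neg (by omega)]
  split <;> omega

lemma majLabel_le_des {σ : List ℕ} {j : ℕ} (hd : isDescSpace σ j) :
    majLabel σ j ≤ des σ := by
  have hj : j < σ.length := hd.2.1
  rw [majLabel, if_neg (by omega), if_pos hd]
  have hsub : insert j ((Finset.Ico (j + 1) σ.length).filter (fun t => isDescSpace σ t)) ⊆
      (Finset.range σ.length).filter (fun t => isDescSpace σ t) := by
    intro t ht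
    rcases Finset.mem_insert.1 ht with rfl | ht
    · exact Finset.mem_filter.2 ⟨Finset.mem_range.2 hj, hd⟩
    · rw [Finset.mem_filter] at ht ⊢
      exact ⟨Finset.mem_range.2 (Finset.mem_Ico.1 ht.1).2, ht.2⟩
  have hcard := Finset.card_le_card hsub
  rw [Finset.card_insert_of_notMem (by simp), card_range_filter_desc] at hcard
  omega

lemma majLabel_gt_des {σ : List ℕ} {j : ℕ} (hj : j < σ.length) (hd : ¬ isDescSpace σ j) :
    des σ < majLabel σ j := by
  rw [majLabel, if_neg (by omega), if_neg hd]
  omega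

lemma majLabel_le_length {σ : List ℕ} {j : ℕ} (hj : j ≤ σ.length) :
    majLabel σ j ≤ σ.length := by
  rcases eq_or_lt_of_le hj with rfl | hj
  · rw [majLabel, if_pos rfl]; omega
  rw [majLabel, if_neg (by omega)]
  by_cases hd : isDescSpace σ j
  · rw [if_pos hd]
    have := majLabel_le_des hd
    rw [majLabel, if_neg (by omega), if_pos hd] at this
    have := des_le_length σ
    omega
  · rw [if_neg hd]
    have hsub : insert j ((Finset.range j).filter (fun t => ¬ isDescSpace σ t)) ⊆
        (Finset.range σ.length).filter (fun t => ¬ isDescSpace σ t) := by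
      intro t ht
      rcases Finset.mem_insert.1 ht with rfl | ht
      · exact Finset.mem_filter.2 ⟨Finset.mem_range.2 hj, hd⟩
      · rw [Finset.mem_filter] at ht ⊢
        have := Finset.mem_range.1 ht.1
        exact ⟨Finset.mem_range.2 (by omega), ht.2⟩
    have hcard := Finset.card_le_card hsub
    rw [Finset.card_insert_of_notMem (by simp), card_range_filter_nondesc] at hcard
    have := des_le_length σ
    omega

lemma majLabel_desc_anti {σ : List ℕ} {j j' : ℕ} (hjj : j < j')
    (hd : isDescSpace σ j) (hd' : isDescSpace σ j') :
    majLabel σ j' < majLabel σ j := by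
  have hj : j < σ.length := hd.2.1
  have hj' : j' < σ.length := hd'.2.1
  rw [majLabel, majLabel, if_neg (show ¬ j' = σ.length by omega), if_pos hd',
    if_neg (show ¬ j = σ.length by omega), if_pos hd]
  have hsub : insert j' ((Finset.Ico (j' + 1) σ.length).filter (fun t => isDescSpace σ t)) ⊆
      (Finset.Ico (j + 1) σ.length).filter (fun t => isDescSpace σ t) := by
    intro t ht
    rcases Finset.mem_insert.1 ht with rfl | ht
    · exact Finset.mem_filter.2 ⟨Finset.mem_Ico.2 ⟨by omega, hj'⟩, hd'⟩
    · rw [Finset.mem_filter] at ht ⊢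
      have := Finset.mem_Ico.1 ht.1
      exact ⟨Finset.mem_Ico.2 ⟨by omega, this.2⟩, ht.2⟩
  have hcard := Finset.card_le_card hsub
  rw [Finset.card_insert_of_notMem (by simp)] at hcard
  omega

lemma majLabel_nondesc_mono {σ : List ℕ} {j j' : ℕ} (hjj : j < j') (hj' : j' < σ.length)
    (hd : ¬ isDescSpace σ j) (hd' : ¬ isDescSpace σ j') :
    majLabel σ j < majLabel σ j' := by
  rw [majLabel, if_neg (by omega), if_neg hd, majLabel, if_neg (by omega), if_neg hd']
  have hsub : insert j ((Finset.range j).filter (fun t => ¬ isDescSpace σ t)) ⊆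
      (Finset.range j').filter (fun t => ¬ isDescSpace σ t) := by
    intro t ht
    rcases Finset.mem_insert.1 ht with rfl | ht
    · exact Finset.mem_filter.2 ⟨Finset.mem_range.2 hjj, hd⟩
    · rw [Finset.mem_filter] at ht ⊢
      have := Finset.mem_range.1 ht.1
      exact ⟨Finset.mem_range.2 (by omega), ht.2⟩
  have hcard := Finset.card_le_card hsub
  rw [Finset.card_insert_of_notMem (by simp)] at hcard
  omega

lemma majLabel_injOn {σ : List ℕ} {j j' : ℕ} (hj : j ≤ σ.length) (hj' : j' ≤ σ.length)
    (h : majLabel σ j = majLabel σ j') : j = j' := by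
  by_contra hne
  rcases Nat.lt_or_ge j σ.length with hjl | hjl
  swap
  · have h0 : majLabel σ j = 0 := by rw [show j = σ.length by omega, majLabel, if_pos rfl]
    have h1 := majLabel_pos (σ := σ) (j := j') (by omega)
    omega
  rcases Nat.lt_or_ge j' σ.length with hj'l | hj'l
  swap
  · have h0 : majLabel σ j' = 0 := by rw [show j' = σ.length by omega, majLabel, if_pos rfl]
    have h1 := majLabel_pos (σ := σ) (j := j) (by omega)
    omega
  by_cases hd : isDescSpace σ j <;> by_cases hd' : isDescSpace σ j'
  · rcases lt_or_gt_of_ne hne with hlt | hgt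
    · have := majLabel_desc_anti hlt hd hd'; omega
    · have := majLabel_desc_anti hgt hd' hd; omega
  · have h1 := majLabel_le_des hd
    have h2 := majLabel_gt_des hj'l hd'
    omega
  · have h1 := majLabel_le_des hd'
    have h2 := majLabel_gt_des hjl hd
    omega
  · rcases lt_or_gt_of_ne hne with hlt | hgt
    · have := majLabel_nondesc_mono hlt hj'l hd hd'; omega
    · have := majLabel_nondesc_mono hgt hjl hd' hd; omega

lemma majLabel_surj {σ : List ℕ} {i : ℕ} (hi : i ≤ σ.length) :
    ∃ j ≤ σ.length, majLabel σ j = i := by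
  have hs := Finset.surj_on_of_inj_on_of_card_le
    (s := Finset.range (σ.length + 1)) (t := Finset.range (σ.length + 1))
    (f := fun j _ => majLabel σ j)
    (fun j hj => Finset.mem_range.2 (by
      show majLabel σ j < σ.length + 1
      have := majLabel_le_length (σ := σ) (j := j) (by have := Finset.mem_range.1 hj; omega)
      omega))
    (fun j j' hj hj' hh => majLabel_injOn
      (by have := Finset.mem_range.1 hj; omega) (by have := Finset.mem_range.1 hj'; omega) hh)
    le_rfl
  obtain ⟨j, hj, hji⟩ := hs i (Finset.mem_range.2 (by omega))
  refine ⟨j, by have := Finset.mem_range.1 hj; omega, ?_⟩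
  simpa using hji.symm

lemma spaceOfLabel_spec {σ : List ℕ} {i : ℕ} (hi : i ≤ σ.length) :
    spaceOfLabel majLabel σ i ≤ σ.length ∧ majLabel σ (spaceOfLabel majLabel σ i) = i := by
  obtain ⟨j, hj, hji⟩ := majLabel_surj (σ := σ) hi
  have hsome : ((List.range (σ.length + 1)).find? (fun j => decide (majLabel σ j = i))).isSome := by
    rw [List.find?_isSome]
    exact ⟨j, List.mem_range.2 (by omega), by simpa using hji⟩
  rcases hfind : (List.range (σ.length + 1)).find? (fun j => decide (majLabel σ j = i)) with
    _ | a
  · rw [hfind] at hsome; simp at hsome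
  · have h1 := List.find?_some hfind
    have h2 := List.mem_of_find?_eq_some hfind
    rw [List.mem_range] at h2
    simp only [decide_eq_true_eq] at h1
    rw [spaceOfLabel, hfind]
    exact ⟨by simpa using Nat.lt_succ_iff.1 h2, h1⟩

lemma isPerm.length {π : List ℕ} {n : ℕ} (h : isPerm π n) : π.length = n := by
  simpa using List.Perm.length_eq h

lemma isPerm.mem_iff {π : List ℕ} {n : ℕ} (h : isPerm π n) {x : ℕ} :
    x ∈ π ↔ 1 ≤ x ∧ x ≤ n := by
  rw [List.Perm.mem_iff h]
  simp only [List.mem_map, List.mem_range]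
  constructor
  · rintro ⟨y, hy, rfl⟩; omega
  · rintro ⟨h1, h2⟩; exact ⟨x - 1, by omega, by omega⟩

lemma isPerm.nodup {π : List ℕ} {n : ℕ} (h : isPerm π n) : π.Nodup := by
  refine (List.Perm.nodup_iff h).2 (List.Nodup.map ?_ (List.nodup_range))
  intro a b hab
  simpa using hab

lemma range_map_filter (n k : ℕ) (hk : k ≤ n) :
    ((List.range n).map (· + 1)).filter (· ≤ k) = (List.range k).map (· + 1) := by
  induction n with
  | zero => simp; omega
  | succ m ih =>
    rcases eq_or_lt_of_le hk with rfl | hlt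
    · apply List.filter_eq_self.2
      intro a ha
      simp only [List.mem_map, List.mem_range] at ha
      obtain ⟨y, hy, rfl⟩ := ha
      simp
      omega
    · rw [List.range_succ, List.map_append, List.filter_append, ih (by omega)]
      simp
      omega

lemma isPerm.filter_le {π : List ℕ} {n : ℕ} (h : isPerm π n) {k : ℕ} (hk : k ≤ n) :
    isPerm (π.filter (· ≤ k)) k := by
  have h2 := List.Perm.filter (· ≤ k) h
  rw [range_map_filter n k hk] at h2
  exact h2

lemma filter_insertIdx_not {l : List ℕ} {v : ℕ} (q : ℕ → Bool) (hq : q v = false) :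
    ∀ p, ((l.insertIdx p v).filter q) = l.filter q := by
  induction l with
  | nil =>
    intro p
    cases p with
    | zero => simp [List.insertIdx_zero, List.filter_cons, hq]
    | succ p => simp [List.insertIdx_succ_nil]
  | cons a t ih =>
    intro p
    cases p with
    | zero => simp [List.insertIdx_zero, List.filter_cons, hq]
    | succ p => rw [List.insertIdx_succ_cons, List.filter_cons, List.filter_cons, ih p]

lemma idxOf_insertIdx {l : List ℕ} {v : ℕ} (hv : v ∉ l) :
    ∀ p, p ≤ l.length → (l.insertIdx p v).idxOf v = p := by
  induction l with
  | nil =>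
    intro p hp
    have hp0 : p = 0 := by simpa using hp
    subst hp0
    simp [List.insertIdx_zero]
  | cons a t ih =>
    intro p hp
    cases p with
    | zero => simp [List.insertIdx_zero]
    | succ p =>
      rw [List.insertIdx_succ_cons]
      have hav : a ≠ v := by
        intro h; exact hv (h ▸ List.mem_cons_self)
      rw [List.idxOf_cons_ne _ hav, ih (fun h => hv (List.mem_cons_of_mem a h)) p (by simpa using hp)]

lemma reconstruct {m : ℕ} : ∀ {l : List ℕ}, l.Nodup → (∀ x ∈ l, x ≤ m + 1) → (m + 1) ∈ l →
    (l.filter (· ≤ m)).insertIdx (l.idxOf (m + 1)) (m + 1) = l := by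
  intro l
  induction l with
  | nil => intro _ _ h; simp at h
  | cons a t ih =>
    intro hnd hbd hm
    by_cases hav : a = m + 1
    · subst hav
      rw [List.idxOf_cons_self, List.filter_cons, if_neg (by simp), List.insertIdx_zero]
      congr 1
      apply List.filter_eq_self.2
      intro x hx
      have h1 : x ≤ m + 1 := hbd x (List.mem_cons_of_mem _ hx)
      have h2 : x ≠ m + 1 := by
        intro h
        subst h
        exact (List.nodup_cons.1 hnd).1 hx
      simp
      omega
    · have ham : a ≤ m := by
        have := hbd a (List.mem_cons_self)
        omega
      rw [List.filter_cons, if_pos (by simpa using ham),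
        List.idxOf_cons_ne _ hav, List.insertIdx_succ_cons,
        ih (List.nodup_cons.1 hnd).2 (fun x hx => hbd x (List.mem_cons_of_mem a hx))
          ((List.mem_cons.1 hm).resolve_left (fun h => hav h.symm))]

lemma isPerm_nil : isPerm [] 0 := by simp [isPerm]

lemma isPerm.insertIdx {σ : List ℕ} {m : ℕ} (h : isPerm σ m) {p : ℕ} (hp : p ≤ σ.length) :
    isPerm (σ.insertIdx p (m + 1)) (m + 1) := by
  have h1 : (σ.insertIdx p (m + 1)).Perm ((m + 1) :: σ) := List.perm_insertIdx _ _ hp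
  refine h1.trans ?_
  have h2 : ((m + 1) :: σ).Perm ((m + 1) :: (List.range m).map (· + 1)) :=
    List.Perm.cons _ h
  refine h2.trans ?_
  rw [List.range_succ, List.map_append]
  simpa using (List.perm_append_singleton (m + 1) ((List.range m).map (· + 1))).symm

lemma majTable_insertIdx {σ : List ℕ} {m : ℕ} (h : isPerm σ m) {p : ℕ} (hp : p ≤ m) :
    majTable (σ.insertIdx p (m + 1)) = majTable σ ++ [majLabel σ p] := by
  have hlen : σ.length = m := h.length
  have hp' : p ≤ σ.length := by omega
  have hlen2 : (σ.insertIdx p (m + 1)).length = m + 1 := by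
    rw [List.length_insertIdx_of_le_length hp', hlen]
  rw [majTable, majTable, hlen2, hlen, List.range_succ, List.map_append]
  congr 1
  · apply List.map_congr_left
    intro k hk
    rw [List.mem_range] at hk
    by_cases hk0 : k = 0
    · simp [hk0]
    · rw [if_neg hk0, if_neg hk0,
        filter_insertIdx_not (l := σ) (v := m + 1) (· ≤ k) (by simp; omega) p,
        filter_insertIdx_not (l := σ) (v := m + 1) (· ≤ k + 1) (by simp; omega) p]
  · simp only [List.map_cons, List.map_nil]
    congr 1
    rcases Nat.eq_zero_or_pos m with rfl | hm
    · have hσ : σ = [] := List.length_eq_zero_iff.1 hlen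
      subst hσ
      have hp0 : p = 0 := by omega
      subst hp0
      simp [majLabel]
    · rw [if_neg (by omega)]
      have h1 : (σ.insertIdx p (m + 1)).filter (· ≤ m) = σ.filter (· ≤ m) :=
        filter_insertIdx_not _ (by simp) p
      have h2 : σ.filter (· ≤ m) = σ := by
        apply List.filter_eq_self.2
        intro x hx
        have := (h.mem_iff.1 hx).2
        simpa using this
      have h3 : (σ.insertIdx p (m + 1)).filter (· ≤ m + 1) = σ.insertIdx p (m + 1) := by
        apply List.filter_eq_self.2
        intro x hx
        rcases List.mem_insertIdx hp' |>.1 hx with rfl | hx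
        · simp
        · have := (h.mem_iff.1 hx).2
          simp
          omega
      have h4 : m + 1 ∉ σ := by
        intro hc
        have := (h.mem_iff.1 hc).2
        omega
      rw [h1, h2, h3, idxOf_insertIdx h4 p hp']

lemma getD_lt_succ {σ : List ℕ} {m : ℕ} (h : isPerm σ m) : ∀ j, σ.getD j 0 < m + 1 := by
  intro j
  rcases lt_or_ge j σ.length with hj | hj
  · rw [getD_eq_getElem' _ _ hj]
    have hmem : σ[j] ∈ σ := List.getElem_mem hj
    have := (h.mem_iff.1 hmem).2
    omega
  · rw [getD_eq_zero _ _ hj]; omega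

lemma length_majTable (π : List ℕ) : (majTable π).length = π.length := by
  simp [majTable]

lemma main_induction (n : ℕ) :
    (∀ π, isPerm π n → memE (majTable π) n) ∧
    (∀ π, isPerm π n → (majTable π).sum = maj π) ∧
    (∀ π π', isPerm π n → isPerm π' n → majTable π = majTable π' → π = π') ∧
    (∀ w, memE w n → ∃ π, isPerm π n ∧ majTable π = w) := by
  induction n with
  | zero =>
    have hnil : ∀ π, isPerm π 0 → π = [] := fun π h => List.length_eq_zero_iff.1 h.length
    refine ⟨?_, ?_, ?_, ?_⟩
    · intro π h
      rw [hnil π h]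
      exact ⟨by simp [majTable], fun k hk => by omega⟩
    · intro π h
      rw [hnil π h]
      simp [majTable, maj, desSet]
    · intro π π' h h' _
      rw [hnil π h, hnil π' h']
    · intro w hw
      have : w = [] := List.length_eq_zero_iff.1 hw.1
      exact ⟨[], isPerm_nil, by rw [this]; simp [majTable]⟩
  | succ m ih =>
    obtain ⟨ihE, ihS, ihI, ihSur⟩ := ih
    have decomp : ∀ π, isPerm π (m + 1) →
        ∃ σ p, isPerm σ m ∧ p ≤ m ∧ π = σ.insertIdx p (m + 1) := by
      intro π h
      have hmem : m + 1 ∈ π := h.mem_iff.2 ⟨by omega, le_rfl⟩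
      have hidx := List.idxOf_lt_length_iff.2 hmem
      have hl := h.length
      refine ⟨π.filter (· ≤ m), π.idxOf (m + 1), h.filter_le (by omega), by omega, ?_⟩
      exact (reconstruct h.nodup (fun x hx => (h.mem_iff.1 hx).2) hmem).symm
    refine ⟨?_, ?_, ?_, ?_⟩
    · intro π h
      obtain ⟨σ, p, hσ, hp, rfl⟩ := decomp π h
      have hσl : σ.length = m := hσ.length
      rw [majTable_insertIdx hσ hp]
      obtain ⟨hlen, hbd⟩ := ihE σ hσ
      refine ⟨by rw [List.length_append, hlen]; simp, ?_⟩
      intro k hk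
      rcases lt_or_ge k m with hkm | hkm
      · rw [List.getD_append _ _ _ _ (by omega)]
        exact hbd k hkm
      · have hkm' : k = m := by omega
        subst hkm'
        rw [List.getD_append_right _ _ _ _ (by omega), hlen, Nat.sub_self]
        have := majLabel_le_length (σ := σ) (j := p) (by omega)
        simp only [List.getD_cons_zero]
        omega
    · intro π h
      obtain ⟨σ, p, hσ, hp, rfl⟩ := decomp π h
      have hσl : σ.length = m := hσ.length
      rw [majTable_insertIdx hσ hp, List.sum_append, List.sum_cons, List.sum_nil, ihS σ hσ,
        maj_insertIdx σ (m + 1) p (by omega) (getD_lt_succ hσ)]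
      omega
    · intro π π' h h' heq
      obtain ⟨σ, p, hσ, hp, rfl⟩ := decomp π h
      obtain ⟨σ', p', hσ', hp', rfl⟩ := decomp π' h'
      rw [majTable_insertIdx hσ hp, majTable_insertIdx hσ' hp'] at heq
      have hlen : (majTable σ).length = (majTable σ').length := by
        rw [length_majTable, length_majTable, hσ.length, hσ'.length]
      obtain ⟨h1, h2⟩ := List.append_inj heq hlen
      have hσeq : σ = σ' := ihI _ _ hσ hσ' h1
      subst hσeq
      have h3 : majLabel σ p = majLabel σ p' := by simpa using h2
      have hσl : σ.length = m := hσ.length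
      have hpp : p = p' := majLabel_injOn (by omega) (by omega) h3
      rw [hpp]
    · intro w hw
      obtain ⟨hlen, hbd⟩ := hw
      have hmemE : memE (w.take m) m := by
        refine ⟨by rw [List.length_take]; omega, ?_⟩
        intro k hk
        have hgd : (w.take m).getD k 0 = w.getD k 0 := by
          rw [getD_eq_getElem' _ _ (by rw [List.length_take]; omega),
            getD_eq_getElem' _ _ (by omega)]
          exact List.getElem_take
        rw [hgd]
        exact hbd k (by omega)
      obtain ⟨σ, hσ, hσw⟩ := ihSur (w.take m) hmemE
      have hσl : σ.length = m := hσ.length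
      have ha : w.getD m 0 ≤ m := hbd m (by omega)
      obtain ⟨hple, hlab⟩ := spaceOfLabel_spec (σ := σ) (i := w.getD m 0) (by omega)
      refine ⟨σ.insertIdx (spaceOfLabel majLabel σ (w.getD m 0)) (m + 1),
        hσ.insertIdx (by omega), ?_⟩
      rw [majTable_insertIdx hσ (by omega), hσw, hlab]
      have hdrop : w.drop m = [w.getD m 0] := by
        rw [List.drop_eq_getElem_cons (by omega), getD_eq_getElem' _ _ (by omega)]
        congr 1
        apply List.drop_eq_nil_of_le
        omega
      rw [← hdrop, List.take_append_drop]

end BS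
/-- the major index table is a bijection from Sₙ onto Eₙ,
and the entries of the major index table of π sum to maj(π). -/
theorem majTable_bijOn_sum (n : ℕ) :
    Set.BijOn BS.majTable {l | BS.isPerm l n} {w | BS.memE w n} ∧
    ∀ π : List ℕ, BS.isPerm π n → (BS.majTable π).sum = BS.maj π := by
  obtain ⟨hE, hS, hI, hSur⟩ := BS.main_induction n
  refine ⟨⟨fun π h => hE π h, fun π hπ π' hπ' heq => hI π π' hπ hπ' heq, ?_⟩, hS⟩
  intro w hw
  obtain ⟨π, hπ, hπw⟩ := hSur w hw
  exact ⟨π, hπ, hπw⟩
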